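/- arXiv:2207.10159 — 2 statements merged into one kernel-verified Lean document; each statement's English description precedes it below -/
import Mathlib

section
/- Let S and S' be self-similar Jordan zippers in ℝ^n (i.e., zippers whose structural parametrizations are homeomorphisms from [0,1] onto their attractors γ and γ') with the same number of maps m and the same signature ε. Then there exists a unique homeomorphism f : γ → γ' such that f ∘ S_i = S'_i ∘ f on γ for every i ∈ {1, ..., m}. -/
open Set Metric

/-- `S i`, for `i < m`, is a contracting similarity with ratio `r i ∈ (0,1)`. -/
def IsSimilaritySystem {X : Type*} [MetricSpace X] (m : ℕ)
    (S : ℕ → X → X) (r : ℕ → ℝ) : Prop :=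
  ∀ i < m, 0 < r i ∧ r i < 1 ∧ ∀ x y, dist (S i x) (S i y) = r i * dist x y

/-- Self-similar zipper with maps `S 0, …, S (m-1)`, ratios `r`, vertices `z 0, …, z m`,
signature `ε` (values in `{0,1}`).  Here `S i` plays the role of the map `S_{i+1}` of the
paper, so the zipper conditions read `S i (z 0) = z (i + ε i)` and
`S i (z m) = z (i + 1 - ε i)`. -/
def IsZipper {X : Type*} [MetricSpace X] (m : ℕ)
    (S : ℕ → X → X) (r : ℕ → ℝ) (z : ℕ → X) (ε : ℕ → ℕ) : Prop :=
  1 ≤ m ∧ IsSimilaritySystem m S r ∧ (∀ i < m, ε i ≤ 1) ∧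
    ∀ i < m, S i (z 0) = z (i + ε i) ∧ S i (z m) = z (i + 1 - ε i)

/-- Linear zipper on `[0,1]`, with vertices `0 = t 0 < t 1 < … < t m = 1`. -/
def IsLinearZipper (m : ℕ) (T : ℕ → ℝ → ℝ) (r : ℕ → ℝ) (t : ℕ → ℝ) (ε : ℕ → ℕ) : Prop :=
  IsZipper m T r t ε ∧ t 0 = 0 ∧ t m = 1 ∧ ∀ i < m, t i < t (i + 1)

/-- `K` is the attractor of the iterated function system `{S i : i < m}`. -/
def IsAttractor {X : Type*} [MetricSpace X] (m : ℕ) (S : ℕ → X → X) (K : Set X) : Prop :=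
  K.Nonempty ∧ IsCompact K ∧ K = ⋃ i ∈ Finset.range m, S i '' K

/-- `g` is a structural parametrization of the zipper `S` (with vertices `z`)
relative to the linear zipper `T` (with vertices `t`). -/
def IsStructuralParam {X : Type*} [MetricSpace X] (m : ℕ) (S : ℕ → X → X)
    (T : ℕ → ℝ → ℝ) (t : ℕ → ℝ) (z : ℕ → X) (g : ℝ → X) : Prop :=
  ContinuousOn g (Icc 0 1) ∧ (∀ i ≤ m, g (t i) = z i) ∧
    ∀ i < m, ∀ x ∈ Icc (0:ℝ) 1, S i (g x) = g (T i x)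

/-- A Jordan zipper: a zipper whose attractor `γ` is a Jordan arc, i.e. some structural
parametrization is injective on `[0,1]` (hence a homeomorphism onto `γ`). -/
def IsJordanZipper {X : Type*} [MetricSpace X] (m : ℕ) (S : ℕ → X → X) (r : ℕ → ℝ)
    (z : ℕ → X) (ε : ℕ → ℕ) (γ : Set X) : Prop :=
  IsZipper m S r z ε ∧ IsAttractor m S γ ∧
    ∃ T rT t g, IsLinearZipper m T rT t ε ∧ IsStructuralParam m S T t z g ∧
      InjOn g (Icc 0 1) ∧ g '' Icc 0 1 = γ

/-- `g` is an injective continuous parametrization of the arc `γ` by `[0,1]`. -/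
def IsArcParam {X : Type*} [MetricSpace X] (γ : Set X) (g : ℝ → X) : Prop :=
  ContinuousOn g (Icc 0 1) ∧ InjOn g (Icc 0 1) ∧ g '' Icc 0 1 = γ

/-- Bounded turning with constant `M`: every subarc `γ_{xy}` (expressed via any
parametrization of the arc) has diameter at most `M‖x - y‖`. -/
def BoundedTurning {X : Type*} [MetricSpace X] (γ : Set X) (M : ℝ) : Prop :=
  0 < M ∧ ∀ g : ℝ → X, IsArcParam γ g →
    ∀ s ∈ Icc (0:ℝ) 1, ∀ u ∈ Icc (0:ℝ) 1, diam (g '' uIcc s u) ≤ M * dist (g s) (g u)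

/-- `f` agrees with the systems `S` and `S'` on `γ`: `f ∘ S i = S' i ∘ f` on `γ`. -/
def Agrees {X Y : Type*} [MetricSpace X] [MetricSpace Y] (m : ℕ)
    (S : ℕ → X → X) (S' : ℕ → Y → Y) (γ : Set X) (f : X → Y) : Prop :=
  ∀ i < m, ∀ x ∈ γ, f (S i x) = S' i (f x)

/-- `f` restricts to a homeomorphism of the compact set `γ` onto `γ'`. -/
def IsHomeoOnto {X Y : Type*} [MetricSpace X] [MetricSpace Y]
    (γ : Set X) (γ' : Set Y) (f : X → Y) : Prop :=
  ContinuousOn f γ ∧ InjOn f γ ∧ f '' γ = γ'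

/-- Composition `S_{i₁} ∘ … ∘ S_{i_k}` along a multi-index (a list). -/
def compS {X : Type*} (S : ℕ → X → X) : List ℕ → X → X
  | [] => id
  | i :: l => S i ∘ compS S l

/-- Product of the ratios along a multi-index. -/
def ratioProd (p : ℕ → ℝ) (l : List ℕ) : ℝ := (l.map p).prod

/-!
Through structural parametrizations `g`, `g'` the systems `S`, `S'` on the arcs become linear
zippers `T`, `T'` on `[0,1]` with the common signature, so it suffices to find a self-homeomorphism
`h` of `[0,1]` with `h ∘ T i = T' i ∘ h`, and to take `f = g' ∘ h ∘ g⁻¹`.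

Such an `h` is the fixed point of a contracting gluing operator, which on `[t i, t (i+1)]` is
`q ↦ T' i ∘ q ∘ (T i)⁻¹`. A continuous conjugacy from `T` to `T'` must send the fixed point `p` of
`T 0` to the fixed point of `T' 0`, hence is determined on the orbit of `p` under all compositions
of the `T i`, which is dense in `[0,1]`. So conjugacies are unique. This makes `h` invertible (the
conjugacy from `T'` back to `T`, composed with `h`, must be the identity) and gives uniqueness of
`f`.
-/

open Function unitInterval

section WordOrbit

variable {X : Type*} {m : ℕ} {S : ℕ → X → X}

def wordOrbit (m : ℕ) (S : ℕ → X → X) (p : X) : Set X :=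
  {x | ∃ w : List ℕ, (∀ j ∈ w, j < m) ∧ compS S w p = x}

theorem mapsTo_compS {A : Set X} (hS : ∀ i < m, MapsTo (S i) A A) {w : List ℕ}
    (hw : ∀ j ∈ w, j < m) : MapsTo (compS S w) A A := by
  induction w with
  | nil => exact mapsTo_id A
  | cons i w ih =>
    rw [List.forall_mem_cons] at hw
    exact (hS i hw.1).comp (ih hw.2)

theorem wordOrbit_subset {A : Set X} (hS : ∀ i < m, MapsTo (S i) A A) {p : X} (hp : p ∈ A) :
    wordOrbit m S p ⊆ A := by
  rintro _ ⟨w, hw, rfl⟩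
  exact mapsTo_compS hS hw hp

end WordOrbit

section SimilaritySystem

variable {X : Type*} [MetricSpace X] {m : ℕ} {S : ℕ → X → X} {r : ℕ → ℝ}

theorem IsSimilaritySystem.continuous (hS : IsSimilaritySystem m S r) {i : ℕ} (hi : i < m) :
    Continuous (S i) :=
  (LipschitzWith.of_dist_le_mul (K := ⟨r i, (hS i hi).1.le⟩)
    fun x y => ((hS i hi).2.2 x y).le).continuous

theorem IsSimilaritySystem.eq_of_isFixedPt (hS : IsSimilaritySystem m S r) {i : ℕ} (hi : i < m)
    {a b : X} (ha : IsFixedPt (S i) a) (hb : IsFixedPt (S i) b) : a = b := by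
  obtain ⟨-, hr1, hd⟩ := hS i hi
  have h := hd a b
  rw [ha.eq, hb.eq] at h
  exact dist_eq_zero.1 (by nlinarith [dist_nonneg (x := a) (y := b)])

theorem IsSimilaritySystem.exists_ratio_le (hS : IsSimilaritySystem m S r) :
    ∃ ρ, 0 ≤ ρ ∧ ρ < 1 ∧ ∀ i < m, r i ≤ ρ := by
  rcases Nat.eq_zero_or_pos m with rfl | hm
  · exact ⟨0, le_rfl, zero_lt_one, fun i hi => absurd hi (Nat.not_lt_zero i)⟩
  obtain ⟨i₀, hi₀, hmax⟩ := (Finset.range m).exists_max_image r ⟨0, Finset.mem_range.2 hm⟩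
  obtain ⟨hr0, hr1, -⟩ := hS i₀ (Finset.mem_range.1 hi₀)
  exact ⟨r i₀, hr0.le, hr1, fun i hi => hmax i (Finset.mem_range.2 hi)⟩

theorem IsSimilaritySystem.subset_closure_wordOrbit (hS : IsSimilaritySystem m S r) {K : Set X}
    (hK : Bornology.IsBounded K) (hcover : K ⊆ ⋃ i < m, S i '' K) {p : X} (hp : p ∈ K) :
    K ⊆ closure (wordOrbit m S p) := by
  obtain ⟨ρ, hρ0, hρ1, hρ⟩ := hS.exists_ratio_le
  have approx : ∀ k : ℕ, ∀ x ∈ K, ∃ y ∈ wordOrbit m S p, dist x y ≤ ρ ^ k * diam K := by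
    intro k
    induction k with
    | zero =>
      exact fun x hx => ⟨p, ⟨[], by simp, rfl⟩, by simpa using dist_le_diam_of_mem hK hx hp⟩
    | succ k ih =>
      intro x hx
      obtain ⟨i, hi, y, hy, rfl⟩ : ∃ i < m, ∃ y ∈ K, S i y = x := by simpa using hcover hx
      obtain ⟨_, ⟨w, hw, rfl⟩, hdist⟩ := ih y hy
      refine ⟨compS S (i :: w) p, ⟨i :: w, List.forall_mem_cons.2 ⟨hi, hw⟩, rfl⟩, ?_⟩
      calc dist (S i y) (S i (compS S w p)) = r i * dist y (compS S w p) := (hS i hi).2.2 _ _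
        _ ≤ ρ * (ρ ^ k * diam K) := mul_le_mul (hρ i hi) hdist dist_nonneg hρ0
        _ = ρ ^ (k + 1) * diam K := by ring
  intro x hx
  rw [Metric.mem_closure_iff]
  intro δ hδ
  have hlim : Filter.Tendsto (fun k => ρ ^ k * diam K) Filter.atTop (nhds 0) := by
    simpa using (tendsto_pow_atTop_nhds_zero_of_lt_one hρ0 hρ1).mul_const (diam K)
  obtain ⟨k, hk⟩ := (hlim.eventually (gt_mem_nhds hδ)).exists
  obtain ⟨y, hy, hxy⟩ := approx k x hx
  exact ⟨y, hy, hxy.trans_lt hk⟩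

end SimilaritySystem

section Agrees

variable {X Y Z : Type*} [MetricSpace X] [MetricSpace Y] [MetricSpace Z] {m : ℕ}
  {S : ℕ → X → X} {S' : ℕ → Y → Y} {S'' : ℕ → Z → Z} {A : Set X} {B : Set Y}

theorem Agrees.comp {f : X → Y} {g : Y → Z} (hg : Agrees m S' S'' B g) (hf : Agrees m S S' A f)
    (hfAB : MapsTo f A B) : Agrees m S S'' A (g ∘ f) := fun i hi x hx => by
  simp only [Function.comp_apply, hf i hi x hx, hg i hi _ (hfAB hx)]

theorem Agrees.invFunOn [Nonempty X] {f : X → Y} (hf : Agrees m S S' A f) (hinj : InjOn f A)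
    (hS : ∀ i < m, MapsTo (S i) A A) : Agrees m S' S (f '' A) (invFunOn f A) := by
  rintro i hi _ ⟨x, hx, rfl⟩
  rw [← hf i hi x hx, hinj.leftInvOn_invFunOn (hS i hi hx), hinj.leftInvOn_invFunOn hx]

theorem Agrees.apply_compS {f : X → Y} (hf : Agrees m S S' A f) (hS : ∀ i < m, MapsTo (S i) A A)
    {w : List ℕ} (hw : ∀ j ∈ w, j < m) {x : X} (hx : x ∈ A) :
    f (compS S w x) = compS S' w (f x) := by
  induction w with
  | nil => rfl
  | cons i w ih =>
    rw [List.forall_mem_cons] at hw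
    exact (hf i hw.1 _ (mapsTo_compS hS hw.2 hx)).trans (congrArg (S' i) (ih hw.2))

theorem Agrees.mapsTo_wordOrbit {f : X → Y} (hf : Agrees m S S' A f)
    (hS : ∀ i < m, MapsTo (S i) A A) {p : X} (hp : p ∈ A) :
    MapsTo f (wordOrbit m S p) (wordOrbit m S' (f p)) := by
  rintro _ ⟨w, hw, rfl⟩
  exact ⟨w, hw, (hf.apply_compS hS hw hp).symm⟩

theorem Agrees.eqOn_wordOrbit {f₁ f₂ : X → Y} (h₁ : Agrees m S S' A f₁) (h₂ : Agrees m S S' A f₂)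
    (hS : ∀ i < m, MapsTo (S i) A A) {p : X} (hp : p ∈ A) (hp₁₂ : f₁ p = f₂ p) :
    EqOn f₁ f₂ (wordOrbit m S p) := by
  rintro _ ⟨w, hw, rfl⟩
  rw [h₁.apply_compS hS hw hp, h₂.apply_compS hS hw hp, hp₁₂]

theorem IsHomeoOnto.mapsTo {f : X → Y} (hf : IsHomeoOnto A B f) : MapsTo f A B :=
  hf.2.2 ▸ mapsTo_image f A

theorem IsHomeoOnto.comp {C : Set Z} {f : X → Y} {g : Y → Z} (hg : IsHomeoOnto B C g)
    (hf : IsHomeoOnto A B f) : IsHomeoOnto A C (g ∘ f) := by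
  obtain ⟨hfc, hfi, rfl⟩ := hf
  obtain ⟨hgc, hgi, rfl⟩ := hg
  exact ⟨hgc.comp hfc (mapsTo_image f A), hgi.comp hfi (mapsTo_image f A), image_comp g f A⟩

theorem IsHomeoOnto.invFunOn [Nonempty X] {f : X → Y} (hA : IsCompact A)
    (hf : IsHomeoOnto A B f) : IsHomeoOnto B A (invFunOn f A) := by
  obtain ⟨hc, hinj, rfl⟩ := hf
  refine ⟨?_, (surjOn_image f A).rightInvOn_invFunOn.injOn, hinj.leftInvOn_invFunOn.image_image⟩
  -- the preimage of a closed `C` is `f '' (A ∩ C)`, compact hence closed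
  refine continuousOn_iff_isClosed.2 fun C hC => ⟨f '' (A ∩ C),
    ((hA.inter_right hC).image_of_continuousOn (hc.mono inter_subset_left)).isClosed, ?_⟩
  ext y
  constructor
  · rintro ⟨hyC, x, hx, rfl⟩
    rw [mem_preimage, hinj.leftInvOn_invFunOn hx] at hyC
    exact ⟨mem_image_of_mem f ⟨hx, hyC⟩, mem_image_of_mem f hx⟩
  · rintro ⟨⟨x, ⟨hx, hxC⟩, rfl⟩, hy⟩
    exact ⟨by rwa [mem_preimage, hinj.leftInvOn_invFunOn hx], hy⟩

end Agrees

theorem eq_add_mul_of_dist_eq_mul {T : ℝ → ℝ} {r : ℝ} (hr : 0 < r)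
    (hT : ∀ x y, dist (T x) (T y) = r * dist x y) (x : ℝ) : T x = T 0 + (T 1 - T 0) * x := by
  have hsq : ∀ x y, (T x - T y) ^ 2 = r ^ 2 * (x - y) ^ 2 := fun x y => by
    rw [← sq_abs, ← Real.dist_eq, hT, Real.dist_eq, mul_pow, sq_abs]
  have h10 := hsq 1 0
  have hne : T 1 - T 0 ≠ 0 := fun h => by rw [h] at h10; nlinarith
  have key : 2 * (T 1 - T 0) * (T x - (T 0 + (T 1 - T 0) * x)) = 0 := by
    linear_combination hsq x 0 - hsq x 1 - (2 * x - 1) * h10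
  have := (mul_eq_zero.1 key).resolve_left (mul_ne_zero two_ne_zero hne)
  linarith

namespace IsLinearZipper

variable {m : ℕ} {T T' : ℕ → ℝ → ℝ} {rT rT' t t' : ℕ → ℝ} {ε : ℕ → ℕ}

theorem vertex_le_vertex (hL : IsLinearZipper m T rT t ε) {i j : ℕ} (hij : i ≤ j) (hj : j ≤ m) :
    t i ≤ t j :=
  (strictMonoOn_Iic_of_lt_succ fun k hk => by simpa using hL.2.2.2 k hk).monotoneOn
    (mem_Iic.2 (hij.trans hj)) (mem_Iic.2 hj) hij

theorem vertex_mem (hL : IsLinearZipper m T rT t ε) {i : ℕ} (hi : i ≤ m) : t i ∈ I :=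
  ⟨hL.2.1 ▸ hL.vertex_le_vertex i.zero_le hi, hL.2.2.1 ▸ hL.vertex_le_vertex hi le_rfl⟩

theorem signature_eq_zero_or_one (hL : IsLinearZipper m T rT t ε) {i : ℕ} (hi : i < m) :
    ε i = 0 ∨ ε i = 1 :=
  Nat.le_one_iff_eq_zero_or_eq_one.1 (hL.1.2.2.1 i hi)

theorem apply_eq (hL : IsLinearZipper m T rT t ε) {i : ℕ} (hi : i < m) (x : ℝ) :
    T i x = t (i + ε i) + (t (i + 1 - ε i) - t (i + ε i)) * x := by
  have h0 : T i 0 = t (i + ε i) := hL.2.1 ▸ (hL.1.2.2.2 i hi).1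
  have h1 : T i 1 = t (i + 1 - ε i) := hL.2.2.1 ▸ (hL.1.2.2.2 i hi).2
  rw [eq_add_mul_of_dist_eq_mul (hL.1.2.1 i hi).1 (hL.1.2.1 i hi).2.2 x, h0, h1]

theorem ratio_eq (hL : IsLinearZipper m T rT t ε) {i : ℕ} (hi : i < m) :
    rT i = t (i + 1) - t i := by
  have h := (hL.1.2.1 i hi).2.2 1 0
  rw [hL.apply_eq hi, hL.apply_eq hi, Real.dist_eq, Real.dist_eq, sub_zero, abs_one, mul_one,
    mul_one, mul_zero, add_zero, add_sub_cancel_left] at h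
  have hlt := hL.2.2.2 i hi
  rcases hL.signature_eq_zero_or_one hi with he | he <;>
    simp only [he, add_zero, Nat.sub_zero, Nat.add_sub_cancel] at h
  · rw [abs_of_pos (by linarith)] at h
    exact h.symm
  · rw [abs_of_neg (by linarith)] at h
    linarith

theorem image_unitInterval (hL : IsLinearZipper m T rT t ε) {i : ℕ} (hi : i < m) :
    T i '' I = Icc (t i) (t (i + 1)) := by
  have hT : T i = fun θ : ℝ => t (i + ε i) + θ • (t (i + 1 - ε i) - t (i + ε i)) :=
    funext fun x => by rw [hL.apply_eq hi, smul_eq_mul, mul_comm]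
  rw [hT, ← segment_eq_image', segment_eq_uIcc]
  have hle := (hL.2.2.2 i hi).le
  rcases hL.signature_eq_zero_or_one hi with he | he <;> simp [he, uIcc_of_le, uIcc_of_ge, hle]

theorem mapsTo (hL : IsLinearZipper m T rT t ε) {i : ℕ} (hi : i < m) : MapsTo (T i) I I := by
  rw [mapsTo_iff_image_subset, hL.image_unitInterval hi]
  exact Icc_subset_Icc (hL.vertex_mem hi.le).1 (hL.vertex_mem hi).2

theorem exists_mem_Icc (hL : IsLinearZipper m T rT t ε) {x : ℝ} (hx : x ∈ I) :
    ∃ i < m, x ∈ Icc (t i) (t (i + 1)) := by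
  classical
  have hm := hL.1.1
  have hlast : x ≤ t (m - 1 + 1) := by rw [Nat.sub_add_cancel hm, hL.2.2.1]; exact hx.2
  have hP : ∃ j, x ≤ t (j + 1) := ⟨m - 1, hlast⟩
  have hlt : Nat.find hP < m := by have := Nat.find_min' hP hlast; omega
  refine ⟨Nat.find hP, hlt, ?_, Nat.find_spec hP⟩
  rcases h : Nat.find hP with _ | k
  · exact hL.2.1 ▸ hx.1
  · exact (not_le.1 (Nat.find_min hP (h ▸ Nat.lt_succ_self k))).le

theorem closure_wordOrbit (hL : IsLinearZipper m T rT t ε) {p : ℝ} (hp : p ∈ I) :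
    closure (wordOrbit m T p) = I := by
  refine subset_antisymm (closure_minimal (wordOrbit_subset (fun i => hL.mapsTo) hp) isClosed_Icc)
    (hL.1.2.1.subset_closure_wordOrbit (Metric.isBounded_Icc 0 1) (fun x hx => ?_) hp)
  obtain ⟨i, hi, hxi⟩ := hL.exists_mem_Icc hx
  exact mem_iUnion₂.2 ⟨i, hi, hL.image_unitInterval hi ▸ hxi⟩

theorem eqOn_of_agrees (hL : IsLinearZipper m T rT t ε) (hT' : IsSimilaritySystem m T' rT')
    {φ ψ : ℝ → ℝ} (hφ : ContinuousOn φ I) (hψ : ContinuousOn ψ I) (hφa : Agrees m T T' I φ)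
    (hψa : Agrees m T T' I ψ) : EqOn φ ψ I := by
  have hm : 0 < m := hL.1.1
  obtain ⟨p, hp, hfix⟩ := exists_mem_Icc_isFixedPt_of_mapsTo
    (hL.1.2.1.continuous hm).continuousOn zero_le_one (hL.mapsTo hm)
  have hfix' : ∀ χ : ℝ → ℝ, Agrees m T T' I χ → IsFixedPt (T' 0) (χ p) := fun χ hχ => by
    rw [IsFixedPt, ← hχ 0 hm p hp, hfix.eq]
  have hpψ := hT'.eq_of_isFixedPt hm (hfix' φ hφa) (hfix' ψ hψa)
  exact (hφa.eqOn_wordOrbit hψa (fun i => hL.mapsTo) hp hpψ).of_subset_closure hφ hψ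
    (wordOrbit_subset (fun i => hL.mapsTo) hp) (hL.closure_wordOrbit hp).ge

end IsLinearZipper

section Glue

/-- Summand of `glue`: on `[t i, t (i+1)]` the sum `glue m t t' ε q` is `T' i ∘ q ∘ (T i)⁻¹` for
the linear zippers with vertices `t`, `t'` and signature `ε`; clamping each summand to be constant
off its interval makes the sum continuous for every `q`. -/
noncomputable def gluePiece (t t' : ℕ → ℝ) (ε : ℕ → ℕ) (q : C(I, ℝ)) (i : ℕ) (x : ℝ) : ℝ :=
  (t' (i + 1) - t' i) *
    if ε i = 0 then q (projIcc 0 1 zero_le_one ((x - t i) / (t (i + 1) - t i)))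
    else 1 - q (projIcc 0 1 zero_le_one ((t (i + 1) - x) / (t (i + 1) - t i)))

noncomputable def glue (m : ℕ) (t t' : ℕ → ℝ) (ε : ℕ → ℕ) (q : C(I, ℝ)) (x : ℝ) : ℝ :=
  ∑ i ∈ Finset.range m, gluePiece t t' ε q i x

variable {m : ℕ} {T T' : ℕ → ℝ → ℝ} {rT rT' t t' : ℕ → ℝ} {ε : ℕ → ℕ} {q : C(I, ℝ)}

theorem continuous_glue : Continuous (glue m t t' ε q) :=
  continuous_finsetSum _ fun i _ => continuous_const.mul <| by split_ifs <;> fun_prop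

theorem gluePiece_of_le (hL : IsLinearZipper m T rT t ε) (hq0 : q 0 = 0) (hq1 : q 1 = 1)
    {i : ℕ} (hi : i < m) {x : ℝ} (hx : x ≤ t i) : gluePiece t t' ε q i x = 0 := by
  have hgap := sub_pos.2 (hL.2.2.2 i hi)
  unfold gluePiece
  split_ifs
  · rw [projIcc_of_le_left _ (div_nonpos_of_nonpos_of_nonneg (by linarith) hgap.le), Icc.mk_zero,
      hq0, mul_zero]
  · rw [projIcc_of_right_le _ ((one_le_div hgap).2 (by linarith)), Icc.mk_one, hq1, sub_self,
      mul_zero]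

theorem gluePiece_of_ge (hL : IsLinearZipper m T rT t ε) (hq0 : q 0 = 0) (hq1 : q 1 = 1)
    {i : ℕ} (hi : i < m) {x : ℝ} (hx : t (i + 1) ≤ x) :
    gluePiece t t' ε q i x = t' (i + 1) - t' i := by
  have hgap := sub_pos.2 (hL.2.2.2 i hi)
  unfold gluePiece
  split_ifs
  · rw [projIcc_of_right_le _ ((one_le_div hgap).2 (by linarith)), Icc.mk_one, hq1, mul_one]
  · rw [projIcc_of_le_left _ (div_nonpos_of_nonpos_of_nonneg (by linarith) hgap.le), Icc.mk_zero,
      hq0, sub_zero, mul_one]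

theorem glue_eq_of_mem_Icc (hL : IsLinearZipper m T rT t ε) (hq0 : q 0 = 0) (hq1 : q 1 = 1)
    {j : ℕ} (hj : j < m) {x : ℝ} (hx : x ∈ Icc (t j) (t (j + 1))) :
    glue m t t' ε q x = t' j - t' 0 + gluePiece t t' ε q j x := by
  have hbelow : ∑ i ∈ Finset.range j, gluePiece t t' ε q i x = t' j - t' 0 := by
    rw [← Finset.sum_range_sub]
    refine Finset.sum_congr rfl fun i hi => gluePiece_of_ge hL hq0 hq1 (by simp at hi; omega) ?_
    exact (hL.vertex_le_vertex (by simpa using hi) hj.le).trans hx.1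
  have habove : ∑ i ∈ Finset.Ico (j + 1) m, gluePiece t t' ε q i x = 0 := by
    refine Finset.sum_eq_zero fun i hi => ?_
    rw [Finset.mem_Ico] at hi
    exact gluePiece_of_le hL hq0 hq1 hi.2 (hx.2.trans (hL.vertex_le_vertex hi.1 hi.2.le))
  rw [glue, ← Finset.sum_range_add_sum_Ico _ hj, Finset.sum_range_succ, hbelow, habove, add_zero]

theorem glue_zero (hL : IsLinearZipper m T rT t ε) (hq0 : q 0 = 0) (hq1 : q 1 = 1) :
    glue m t t' ε q 0 = 0 := by
  have h0 : (0 : ℝ) ∈ Icc (t 0) (t (0 + 1)) := ⟨hL.2.1.le, (hL.vertex_mem hL.1.1).1⟩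
  rw [glue_eq_of_mem_Icc hL hq0 hq1 hL.1.1 h0, gluePiece_of_le hL hq0 hq1 hL.1.1 hL.2.1.ge]
  ring

theorem glue_one (hL : IsLinearZipper m T rT t ε) (hL' : IsLinearZipper m T' rT' t' ε)
    (hq0 : q 0 = 0) (hq1 : q 1 = 1) : glue m t t' ε q 1 = 1 := by
  rw [glue, Finset.sum_congr rfl fun i hi => gluePiece_of_ge hL hq0 hq1 (Finset.mem_range.1 hi)
    (hL.vertex_mem (Finset.mem_range.1 hi)).2, Finset.sum_range_sub, hL'.2.2.1, hL'.2.1, sub_zero]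

theorem glue_apply (hL : IsLinearZipper m T rT t ε) (hL' : IsLinearZipper m T' rT' t' ε)
    (hq0 : q 0 = 0) (hq1 : q 1 = 1) {j : ℕ} (hj : j < m) {x : ℝ} (hx : x ∈ I) :
    glue m t t' ε q (T j x) = T' j (q ⟨x, hx⟩) := by
  have hTx : T j x ∈ Icc (t j) (t (j + 1)) := hL.image_unitInterval hj ▸ mem_image_of_mem _ hx
  have hgap := sub_pos.2 (hL.2.2.2 j hj)
  rw [glue_eq_of_mem_Icc hL hq0 hq1 hj hTx, hL'.2.1, sub_zero, hL.apply_eq hj, hL'.apply_eq hj,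
    gluePiece]
  rcases hL.signature_eq_zero_or_one hj with he | he
  · have hloc : (t j + (t (j + 1) - t j) * x - t j) / (t (j + 1) - t j) = x := by
      field_simp; ring
    simp only [he, add_zero, Nat.sub_zero, if_true, hloc, projIcc_of_mem _ hx]
  · have hloc : (t (j + 1) - (t (j + 1) + (t j - t (j + 1)) * x)) / (t (j + 1) - t j) = x := by
      field_simp; ring
    simp only [he, Nat.add_sub_cancel, one_ne_zero, if_false, hloc, projIcc_of_mem _ hx]
    ring

theorem dist_glue_le (hL : IsLinearZipper m T rT t ε) (hL' : IsLinearZipper m T' rT' t' ε)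
    {ρ : ℝ} (hρ : ∀ i < m, rT' i ≤ ρ) {q k : C(I, ℝ)} (hq0 : q 0 = 0) (hq1 : q 1 = 1)
    (hk0 : k 0 = 0) (hk1 : k 1 = 1) {x : ℝ} (hx : x ∈ I) :
    dist (glue m t t' ε q x) (glue m t t' ε k x) ≤ ρ * dist q k := by
  obtain ⟨j, hj, hxj⟩ := hL.exists_mem_Icc hx
  rw [glue_eq_of_mem_Icc hL hq0 hq1 hj hxj, glue_eq_of_mem_Icc hL hk0 hk1 hj hxj, dist_add_left,
    gluePiece, gluePiece, Real.dist_eq, ← mul_sub, abs_mul,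
    abs_of_nonneg (sub_pos.2 (hL'.2.2.2 j hj)).le, ← Real.dist_eq]
  refine mul_le_mul (hL'.ratio_eq hj ▸ hρ j hj) ?_ dist_nonneg
    ((hL'.1.2.1 j hj).1.le.trans (hρ j hj))
  split_ifs
  · exact ContinuousMap.dist_apply_le_dist _
  · rw [dist_sub_left]
    exact ContinuousMap.dist_apply_le_dist _

end Glue

namespace IsLinearZipper

variable {m : ℕ} {T T' : ℕ → ℝ → ℝ} {rT rT' t t' : ℕ → ℝ} {ε : ℕ → ℕ}

theorem exists_agrees (hL : IsLinearZipper m T rT t ε) (hL' : IsLinearZipper m T' rT' t' ε) :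
    ∃ h : ℝ → ℝ, ContinuousOn h I ∧ MapsTo h I I ∧ Agrees m T T' I h := by
  obtain ⟨ρ, hρ0, hρ1, hρ⟩ := hL'.1.2.1.exists_ratio_le
  let A : Set C(I, ℝ) := {q | q 0 = 0 ∧ q 1 = 1}
  have hA : IsClosed A := (isClosed_eq (continuous_eval_const 0) continuous_const).inter
    (isClosed_eq (continuous_eval_const 1) continuous_const)
  have : CompleteSpace A := hA.completeSpace_coe
  have : Nonempty A := ⟨⟨⟨Subtype.val, continuous_subtype_val⟩, rfl, rfl⟩⟩
  let Φ : A → A := fun q =>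
    ⟨⟨fun u => glue m t t' ε q u, continuous_glue.comp continuous_subtype_val⟩,
      glue_zero hL q.2.1 q.2.2, glue_one hL hL' q.2.1 q.2.2⟩
  have hΦ : ContractingWith ⟨ρ, hρ0⟩ Φ := ⟨hρ1, LipschitzWith.of_dist_le_mul fun q k =>
    (ContinuousMap.dist_le (by positivity)).2 fun u =>
      dist_glue_le hL hL' hρ q.2.1 q.2.2 k.2.1 k.2.2 u.2⟩
  set F := ContractingWith.fixedPoint Φ hΦ
  have hF : Φ F = F := hΦ.fixedPoint_isFixedPt
  let h : ℝ → ℝ := fun x => F.1 (projIcc 0 1 zero_le_one x)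
  have hc : Continuous h := F.1.continuous.comp continuous_projIcc
  have ha : Agrees m T T' I h := fun i hi x hx => by
    simp only [h, projIcc_of_mem _ hx, projIcc_of_mem _ (hL.mapsTo hi hx)]
    rw [← glue_apply hL hL' F.2.1 F.2.2 hi hx]
    exact congrArg (fun q : A => q.1 ⟨T i x, hL.mapsTo hi hx⟩) hF.symm
  have h0 : h 0 = 0 := by simp only [h, projIcc_left]; exact F.2.1
  refine ⟨h, hc.continuousOn, ?_, ha⟩
  -- `h` maps the orbit of `0` under `T` into that under `T'`, and both orbits are dense in `I`
  have hmaps := (ha.mapsTo_wordOrbit (fun i => hL.mapsTo) unitInterval.zero_mem).closure hc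
  rwa [h0, hL.closure_wordOrbit unitInterval.zero_mem,
    hL'.closure_wordOrbit unitInterval.zero_mem] at hmaps

theorem exists_isHomeoOnto_agrees (hL : IsLinearZipper m T rT t ε)
    (hL' : IsLinearZipper m T' rT' t' ε) : ∃ h, IsHomeoOnto I I h ∧ Agrees m T T' I h := by
  obtain ⟨h, hc, hmaps, ha⟩ := hL.exists_agrees hL'
  obtain ⟨h', hc', hmaps', ha'⟩ := hL'.exists_agrees hL
  have hinv : InvOn h' h I I :=
    ⟨hL.eqOn_of_agrees hL.1.2.1 (hc'.comp hc hmaps) continuousOn_id (ha'.comp ha hmaps)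
      fun _ _ _ _ => rfl,
     hL'.eqOn_of_agrees hL'.1.2.1 (hc.comp hc' hmaps') continuousOn_id (ha.comp ha' hmaps')
      fun _ _ _ _ => rfl⟩
  have hbij := hinv.bijOn hmaps hmaps'
  exact ⟨h, ⟨hc, hbij.injOn, hbij.image_eq⟩, ha⟩

end IsLinearZipper

section JordanZipper

variable {X Y : Type*} [MetricSpace X] [MetricSpace Y] {m : ℕ}

theorem IsStructuralParam.agrees {S : ℕ → X → X} {T : ℕ → ℝ → ℝ} {t : ℕ → ℝ} {z : ℕ → X}
    {g : ℝ → X} (hg : IsStructuralParam m S T t z g) : Agrees m T S I g :=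
  fun i hi x hx => (hg.2.2 i hi x hx).symm

theorem IsJordanZipper.exists_isHomeoOnto_agrees {S : ℕ → X → X} {S' : ℕ → Y → Y}
    {r r' : ℕ → ℝ} {z : ℕ → X} {z' : ℕ → Y} {ε : ℕ → ℕ} {γ : Set X} {γ' : Set Y}
    (hS : IsJordanZipper m S r z ε γ) (hS' : IsJordanZipper m S' r' z' ε γ') :
    ∃ f : X → Y, IsHomeoOnto γ γ' f ∧ Agrees m S S' γ f := by
  obtain ⟨-, -, T, rT, t, g, hL, hg, hinj, rfl⟩ := hS
  obtain ⟨-, -, T', rT', t', g', hL', hg', hinj', rfl⟩ := hS'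
  obtain ⟨h, hh, hha⟩ := hL.exists_isHomeoOnto_agrees hL'
  have hgi : IsHomeoOnto (g '' I) I (invFunOn g I) :=
    IsHomeoOnto.invFunOn isCompact_Icc ⟨hg.1, hinj, rfl⟩
  refine ⟨g' ∘ h ∘ invFunOn g I, IsHomeoOnto.comp ⟨hg'.1, hinj', rfl⟩ (hh.comp hgi), ?_⟩
  exact hg'.agrees.comp (hha.comp (hg.agrees.invFunOn hinj fun i => hL.mapsTo) hgi.mapsTo)
    (hh.mapsTo.comp hgi.mapsTo)

theorem IsJordanZipper.eqOn_of_agrees {S : ℕ → X → X} {S' : ℕ → Y → Y}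
    {r r' : ℕ → ℝ} {z : ℕ → X} {z' : ℕ → Y} {ε ε' : ℕ → ℕ} {γ : Set X} {γ' : Set Y}
    (hS : IsJordanZipper m S r z ε γ) (hS' : IsJordanZipper m S' r' z' ε' γ') {f₁ f₂ : X → Y}
    (hc₁ : ContinuousOn f₁ γ) (hm₁ : MapsTo f₁ γ γ') (ha₁ : Agrees m S S' γ f₁)
    (hc₂ : ContinuousOn f₂ γ) (hm₂ : MapsTo f₂ γ γ') (ha₂ : Agrees m S S' γ f₂) :
    EqOn f₁ f₂ γ := by
  obtain ⟨-, -, T, rT, t, g, hL, hg, -, rfl⟩ := hS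
  obtain ⟨-, -, T', rT', t', g', hL', hg', hinj', rfl⟩ := hS'
  have hgi : IsHomeoOnto (g' '' I) I (invFunOn g' I) :=
    IsHomeoOnto.invFunOn isCompact_Icc ⟨hg'.1, hinj', rfl⟩
  have hgia := hg'.agrees.invFunOn hinj' fun i => hL'.mapsTo
  have hconj : ∀ f : X → Y, ContinuousOn f (g '' I) → MapsTo f (g '' I) (g' '' I) →
      Agrees m S S' (g '' I) f →
      ContinuousOn (invFunOn g' I ∘ f ∘ g) I ∧ Agrees m T T' I (invFunOn g' I ∘ f ∘ g) :=
    fun f hc hm ha => ⟨hgi.1.comp (hc.comp hg.1 (mapsTo_image g I)) (hm.comp (mapsTo_image g I)),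
      hgia.comp (ha.comp hg.agrees (mapsTo_image g I)) (hm.comp (mapsTo_image g I))⟩
  obtain ⟨hφ₁, hφa₁⟩ := hconj f₁ hc₁ hm₁ ha₁
  obtain ⟨hφ₂, hφa₂⟩ := hconj f₂ hc₂ hm₂ ha₂
  have heq := hL.eqOn_of_agrees hL'.1.2.1 hφ₁ hφ₂ hφa₁ hφa₂
  rintro _ ⟨x, hx, rfl⟩
  have hright := (surjOn_image g' I).rightInvOn_invFunOn
  rw [← hright (hm₁ (mem_image_of_mem g hx)), ← hright (hm₂ (mem_image_of_mem g hx))]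
  exact congrArg g' (heq hx)

end JordanZipper

/-- for Jordan zippers with the same signature there is a unique
homeomorphism of the attractors agreeing with the systems. -/
theorem agreeing_homeo_exists_unique {n : ℕ} (m : ℕ)
    (S S' : ℕ → EuclideanSpace ℝ (Fin n) → EuclideanSpace ℝ (Fin n)) (r r' : ℕ → ℝ)
    (z z' : ℕ → EuclideanSpace ℝ (Fin n)) (ε : ℕ → ℕ)
    (γ γ' : Set (EuclideanSpace ℝ (Fin n)))
    (hS : IsJordanZipper m S r z ε γ) (hS' : IsJordanZipper m S' r' z' ε γ') :
    ∃ f : EuclideanSpace ℝ (Fin n) → EuclideanSpace ℝ (Fin n),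
      IsHomeoOnto γ γ' f ∧ Agrees m S S' γ f ∧
        ∀ f', IsHomeoOnto γ γ' f' → Agrees m S S' γ f' → EqOn f f' γ := by
  obtain ⟨f, hf, hfa⟩ := hS.exists_isHomeoOnto_agrees hS'
  exact ⟨f, hf, hfa, fun f' hf' hf'a =>
    hS.eqOn_of_agrees hS' hf.1 hf.mapsTo hfa hf'.1 hf'.mapsTo hf'a⟩
end

section
/- Let S = {S_1, ..., S_m} and S' = {S'_1, ..., S'_m} be self-similar Jordan zippers in ℝ^n with the same signature, whose attractors γ and γ' are arcs of bounded turning. Let p_i, q_i be the similarity ratios of S_i, S'_i, and let α = min over i of min(log p_i / log q_i, log q_i / log p_i). Let f : γ → γ' be the unique homeomorphism with f ∘ S_i = S'_i ∘ f for all i. Then f is Hölder continuous with exponent α: there exists C > 0 such that ‖f(x) − f(y)‖ ≤ C‖x − y‖^α for all x, y ∈ γ. -/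
open Set Metric

/-!
Everything is transported to the parameter interval `[0,1]` of the linear zipper `T`: `g`
parametrizes `γ` and `f ∘ g` parametrizes `γ'`, and `T i` scales distances on the two sides by
`p i` and `q i`. Since `q i ≤ p i ^ α`, a Hölder bound for a pair of parameters passes to its image
under `T i`, with the same constant. A pair enclosing a whole cylinder `[t j, t (j + 1)]` is far
apart in `γ` by bounded turning, so there the bound follows from `diam γ' < ∞`. Any other pair
either lies in one cylinder, and is pulled back by `T j` to a pair farther apart by a factor
`1 / max r`, or has a vertex `t k` strictly between its points. Induction on the scale then gives
the bound first for pairs containing a vertex, then, splitting at `t k` and using bounded turning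
once more, for all pairs.
-/

open Bornology

theorem exists_lt_forall_le_of_forall_lt {β : Type*} [LinearOrder β] [NoMinOrder β]
    {r : ℕ → β} {c : β} : ∀ {m : ℕ}, (∀ j < m, r j < c) → ∃ ρ < c, ∀ j < m, r j ≤ ρ
  | 0, _ => (exists_lt c).imp fun _ hρ => ⟨hρ, fun j hj => absurd hj j.not_lt_zero⟩
  | m + 1, h => by
    obtain ⟨ρ, hρc, hρ⟩ :=
      exists_lt_forall_le_of_forall_lt fun j hj => h j (Nat.lt_succ_of_lt hj)
    refine ⟨max ρ (r m), max_lt hρc (h m m.lt_succ_self), fun j hj => ?_⟩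
    rcases Nat.lt_succ_iff_lt_or_eq.1 hj with hj | rfl
    · exact (hρ j hj).trans (le_max_left _ _)
    · exact le_max_right _ _

theorem exists_gt_forall_ge_of_forall_gt {β : Type*} [LinearOrder β] [NoMaxOrder β]
    {p : ℕ → β} {c : β} {m : ℕ} (h : ∀ j < m, c < p j) : ∃ ρ > c, ∀ j < m, ρ ≤ p j :=
  exists_lt_forall_le_of_forall_lt (β := βᵒᵈ) h

theorem Bornology.IsBounded.induction_on_dist {X : Type*} [PseudoMetricSpace X] {A : Set X}
    (hA : IsBounded A) {r : ℝ} (hr : r < 1) {P : X → X → Prop}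
    (h : ∀ x ∈ A, ∀ y ∈ A, 0 < dist x y →
      (∀ x' ∈ A, ∀ y' ∈ A, dist x y ≤ r * dist x' y' → P x' y') → P x y) :
    ∀ x ∈ A, ∀ y ∈ A, 0 < dist x y → P x y := by
  set ρ := max r 0
  have hscale : ∀ k : ℕ, ∀ x ∈ A, ∀ y ∈ A, diam A * ρ ^ k < dist x y → P x y := by
    intro k
    induction k with
    | zero =>
      intro x hx y hy hxy
      rw [pow_zero, mul_one] at hxy
      exact absurd (dist_le_diam_of_mem hA hx hy) hxy.not_ge
    | succ k ih =>
      intro x hx y hy hxy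
      refine h x hx y hy ((by positivity : 0 ≤ diam A * ρ ^ (k + 1)).trans_lt hxy)
        fun x' hx' y' hy' hle => ih x' hx' y' hy' ?_
      refine lt_of_mul_lt_mul_right ?_ (le_max_right r 0)
      calc diam A * ρ ^ k * ρ = diam A * ρ ^ (k + 1) := by ring
        _ < dist x y := hxy
        _ ≤ r * dist x' y' := hle
        _ ≤ dist x' y' * ρ := by rw [mul_comm]; gcongr; exact le_max_left r 0
  intro x hx y hy hxy
  have hsmall : Filter.Tendsto (fun k : ℕ => diam A * ρ ^ k) Filter.atTop (nhds 0) := by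
    simpa using (tendsto_pow_atTop_nhds_zero_of_lt_one (le_max_right r 0)
      (max_lt hr zero_lt_one)).const_mul (diam A)
  obtain ⟨k, hk⟩ := (hsmall.eventually (gt_mem_nhds hxy)).exists
  exact hscale k x hx y hy hk

theorem image_uIcc_of_dist_eq {T : ℝ → ℝ} {r : ℝ} (hr : 0 ≤ r)
    (hT : ∀ x y, dist (T x) (T y) = r * dist x y) (a b : ℝ) :
    T '' uIcc a b = uIcc (T a) (T b) := by
  have mem_uIcc_iff : ∀ a b x : ℝ, x ∈ uIcc a b ↔ dist a x + dist x b = dist a b :=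
    fun a b x => by rw [dist_add_dist_eq_iff, ← mem_segment_iff_wbtw, segment_eq_uIcc]
  refine (image_subset_iff.2 fun x hx => ?_).antisymm (intermediate_value_uIcc ?_)
  · rw [mem_preimage, mem_uIcc_iff, hT, hT, hT, ← mul_add, (mem_uIcc_iff a b x).1 hx]
  · exact (LipschitzWith.of_dist_le_mul (K := r.toNNReal) fun x y => by
      rw [hT, Real.coe_toNNReal _ hr]).continuous.continuousOn

theorem min_log_div_log_nonneg {a b : ℝ} (ha0 : 0 ≤ a) (ha1 : a ≤ 1) (hb0 : 0 ≤ b)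
    (hb1 : b ≤ 1) : 0 ≤ min (Real.log a / Real.log b) (Real.log b / Real.log a) :=
  le_min (div_nonneg_of_nonpos (Real.log_nonpos ha0 ha1) (Real.log_nonpos hb0 hb1))
    (div_nonneg_of_nonpos (Real.log_nonpos hb0 hb1) (Real.log_nonpos ha0 ha1))

theorem le_rpow_of_le_log_div_log {a b α : ℝ} (ha0 : 0 < a) (ha1 : a < 1) (hb : 0 < b)
    (h : α ≤ Real.log b / Real.log a) : b ≤ a ^ α := by
  rwa [Real.le_rpow_iff_log_le hb ha0, ← le_div_iff_of_neg (Real.log_neg ha0 ha1)]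

theorem BoundedTurning.dist_le {X : Type*} [MetricSpace X] {γ : Set X} {M : ℝ}
    (hγ : BoundedTurning γ M) {g : ℝ → X} (hg : IsArcParam γ g) {s u : ℝ}
    (hs : s ∈ Icc (0:ℝ) 1) (hu : u ∈ Icc (0:ℝ) 1) {x y : ℝ} (hx : x ∈ uIcc s u)
    (hy : y ∈ uIcc s u) : dist (g x) (g y) ≤ M * dist (g s) (g u) := by
  have hbdd : IsBounded (g '' uIcc s u) :=
    (isCompact_Icc.image_of_continuousOn hg.1).isBounded.subset
      (image_mono (uIcc_subset_Icc hs hu))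
  exact (dist_le_diam_of_mem hbdd (mem_image_of_mem g hx) (mem_image_of_mem g hy)).trans
    (hγ.2 g hg s hs u hu)

section Partition

variable {β : Type*} [LinearOrder β] {t : ℕ → β} {m : ℕ}

theorem exists_mem_Icc_succ_or_mem_uIoo (hm : 0 < m) (ht : MonotoneOn t (Iic m)) {s u : β}
    (hs : s ∈ Icc (t 0) (t m)) (hu : u ∈ Icc (t 0) (t m)) :
    (∃ j < m, s ∈ Icc (t j) (t (j + 1)) ∧ u ∈ Icc (t j) (t (j + 1))) ∨
      ∃ k ≤ m, t k ∈ uIoo s u := by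
  classical
  wlog hsu : s ≤ u generalizing s u
  · simpa only [and_comm, uIoo_comm] using this hu hs (le_of_not_ge hsu)
  set j := Nat.findGreatest (fun i => t i ≤ s) m
  have hjs : t j ≤ s := Nat.findGreatest_spec (P := fun i => t i ≤ s) (Nat.zero_le m) hs.1
  rcases (Nat.findGreatest_le (P := fun i => t i ≤ s) m).lt_or_eq with hjm | hjm
  · have hsj : s < t (j + 1) :=
      lt_of_not_ge (Nat.findGreatest_is_greatest j.lt_succ_self hjm)
    by_cases huj : u ≤ t (j + 1)
    · exact Or.inl ⟨j, hjm, ⟨hjs, hsj.le⟩, hjs.trans hsu, huj⟩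
    · exact Or.inr ⟨j + 1, hjm, by rw [uIoo_of_le hsu]; exact ⟨hsj, lt_of_not_ge huj⟩⟩
  · have hlast : t (m - 1) ≤ t m := ht (by simp) (by simp) (Nat.sub_le m 1)
    have hms : t m ≤ s := hjm ▸ hjs
    refine Or.inl ⟨m - 1, by omega, ?_, ?_⟩ <;> rw [show m - 1 + 1 = m by omega]
    exacts [⟨hlast.trans hms, hs.2⟩, ⟨hlast.trans (hms.trans hsu), hu.2⟩]

theorem exists_Icc_succ_subset_uIcc (ht : MonotoneOn t (Iic m)) {i k : ℕ} (hi : i ≤ m)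
    (hk : k ≤ m) (hik : i ≠ k) : ∃ j < m, Icc (t j) (t (j + 1)) ⊆ uIcc (t i) (t k) := by
  wlog hlt : i < k generalizing i k
  · simpa only [uIcc_comm] using this hk hi hik.symm (hik.symm.lt_of_le (not_lt.1 hlt))
  have hsucc : t (i + 1) ≤ t k := ht (by simpa using by omega) hk hlt
  exact ⟨i, hlt.trans_le hk, (Icc_subset_Icc le_rfl hsucc).trans Icc_subset_uIcc⟩

theorem StrictMonoOn.eq_or_eq_succ_of_mem_Icc (ht : StrictMonoOn t (Iic m)) {i j : ℕ}
    (hi : i ≤ m) (hj : j < m) (h : t i ∈ Icc (t j) (t (j + 1))) : i = j ∨ i = j + 1 := by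
  have hji : j ≤ i := (ht.le_iff_le (mem_Iic.2 hj.le) (mem_Iic.2 hi)).1 h.1
  have hij : i ≤ j + 1 := (ht.le_iff_le (mem_Iic.2 hi) (mem_Iic.2 hj)).1 h.2
  omega

end Partition

namespace IsLinearZipper

variable {m : ℕ} {T : ℕ → ℝ → ℝ} {r t : ℕ → ℝ} {ε : ℕ → ℕ}

theorem strictMonoOn (h : IsLinearZipper m T r t ε) : StrictMonoOn t (Iic m) :=
  strictMonoOn_Iic_of_lt_succ h.2.2.2

theorem Icc_endpoints_eq (h : IsLinearZipper m T r t ε) : Icc (t 0) (t m) = Icc 0 1 := by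
  rw [h.2.1, h.2.2.1]

theorem mem_Icc_zero_one (h : IsLinearZipper m T r t ε) {i : ℕ} (hi : i ≤ m) :
    t i ∈ Icc (0:ℝ) 1 := by
  rw [← h.Icc_endpoints_eq]
  exact ⟨h.strictMonoOn.monotoneOn (by simp) (by simpa) (Nat.zero_le i),
    h.strictMonoOn.monotoneOn (by simpa) (by simp) hi⟩

theorem exists_ratio_le (h : IsLinearZipper m T r t ε) : ∃ ρ < 1, ∀ j < m, r j ≤ ρ :=
  exists_lt_forall_le_of_forall_lt fun j hj => (h.1.2.1 j hj).2.1

theorem image_Icc (h : IsLinearZipper m T r t ε) {j : ℕ} (hj : j < m) :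
    T j '' Icc 0 1 = Icc (t j) (t (j + 1)) := by
  obtain ⟨⟨-, hsim, hε, hvert⟩, ht0, htm, hlt⟩ := h
  rw [← uIcc_of_le zero_le_one, ← ht0, ← htm,
    image_uIcc_of_dist_eq (hsim j hj).1.le (hsim j hj).2.2, (hvert j hj).1, (hvert j hj).2,
    ← uIcc_of_le (hlt j hj).le]
  rcases Nat.le_one_iff_eq_zero_or_eq_one.1 (hε j hj) with he | he <;> simp [he, uIcc_comm]

theorem exists_preimage (h : IsLinearZipper m T r t ε) {j : ℕ} (hj : j < m) {x y : ℝ}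
    (hx : x ∈ Icc (t j) (t (j + 1))) (hy : y ∈ Icc (t j) (t (j + 1))) :
    ∃ x' ∈ Icc (0:ℝ) 1, ∃ y' ∈ Icc (0:ℝ) 1,
      T j x' = x ∧ T j y' = y ∧ dist x y = r j * dist x' y' := by
  rw [← h.image_Icc hj] at hx hy
  obtain ⟨x', hx', rfl⟩ := hx
  obtain ⟨y', hy', rfl⟩ := hy
  exact ⟨x', hx', y', hy', rfl, rfl, (h.1.2.1 j hj).2.2 x' y'⟩

theorem exists_eq_of_apply_eq (h : IsLinearZipper m T r t ε) {i j : ℕ} (hi : i ≤ m)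
    (hj : j < m) {x : ℝ} (hx : x ∈ Icc 0 1) (hTx : T j x = t i) : ∃ k ≤ m, t k = x := by
  have hij := h.strictMonoOn.eq_or_eq_succ_of_mem_Icc hi hj
    (hTx ▸ h.image_Icc hj ▸ mem_image_of_mem _ hx)
  obtain ⟨⟨-, hsim, hε, hvert⟩, -, -, -⟩ := h
  have hinj : Function.Injective (T j) := fun a b hab => by
    have hd := (hsim j hj).2.2 a b
    rw [hab, dist_self] at hd
    exact dist_eq_zero.1 ((mul_eq_zero.1 hd.symm).resolve_left (hsim j hj).1.ne')
  have : i = j + ε j ∨ i = j + 1 - ε j := by have := hε j hj; omega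
  rcases this with rfl | rfl
  · exact ⟨0, m.zero_le, hinj ((hvert j hj).1.trans hTx.symm)⟩
  · exact ⟨m, le_rfl, hinj ((hvert j hj).2.trans hTx.symm)⟩

end IsLinearZipper

/-- `G` and `F` play the roles of `g` and `f ∘ g`: parametrizations of `γ` and `γ'` along the
linear zipper `T`. -/
structure IsConjugateParam {X Y : Type*} [PseudoMetricSpace X] [PseudoMetricSpace Y]
    (m : ℕ) (T : ℕ → ℝ → ℝ) (r t : ℕ → ℝ) (ε : ℕ → ℕ) (G : ℝ → X) (F : ℝ → Y)
    (p q : ℕ → ℝ) (α M : ℝ) : Prop where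
  linear : IsLinearZipper m T r t ε
  dist_G : ∀ j < m, ∀ x ∈ Icc (0:ℝ) 1, ∀ y ∈ Icc (0:ℝ) 1,
    dist (G (T j x)) (G (T j y)) = p j * dist (G x) (G y)
  dist_F : ∀ j < m, ∀ x ∈ Icc (0:ℝ) 1, ∀ y ∈ Icc (0:ℝ) 1,
    dist (F (T j x)) (F (T j y)) = q j * dist (F x) (F y)
  ratio_pos : ∀ j < m, 0 < p j
  ratio_le_rpow : ∀ j < m, q j ≤ p j ^ α
  exponent_nonneg : 0 ≤ α
  dist_zero_one_pos : 0 < dist (G 0) (G 1)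
  isBounded_F : IsBounded (F '' Icc 0 1)
  turning : ∀ s ∈ Icc (0:ℝ) 1, ∀ u ∈ Icc (0:ℝ) 1, ∀ x ∈ uIcc s u, ∀ y ∈ uIcc s u,
    dist (G x) (G y) ≤ M * dist (G s) (G u)

namespace IsConjugateParam

variable {X Y : Type*} [PseudoMetricSpace X] [PseudoMetricSpace Y] {m : ℕ} {T : ℕ → ℝ → ℝ}
  {r t : ℕ → ℝ} {ε : ℕ → ℕ} {G : ℝ → X} {F : ℝ → Y} {p q : ℕ → ℝ} {α M : ℝ}

theorem turning_nonneg (h : IsConjugateParam m T r t ε G F p q α M) : 0 ≤ M := by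
  have h01 := h.turning 0 ⟨le_rfl, zero_le_one⟩ 1 ⟨zero_le_one, le_rfl⟩ 0 left_mem_uIcc
    1 right_mem_uIcc
  nlinarith [h.dist_zero_one_pos]

theorem dist_apply_le_of_dist_le (h : IsConjugateParam m T r t ε G F p q α M) {j : ℕ}
    (hj : j < m) {K x y : ℝ} (hx : x ∈ Icc 0 1) (hy : y ∈ Icc 0 1)
    (hxy : dist (F x) (F y) ≤ K * dist (G x) (G y) ^ α) :
    dist (F (T j x)) (F (T j y)) ≤ K * dist (G (T j x)) (G (T j y)) ^ α := by
  have hpα : 0 ≤ p j ^ α := Real.rpow_nonneg (h.ratio_pos j hj).le α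
  rw [h.dist_F j hj x hx y hy, h.dist_G j hj x hx y hy,
    Real.mul_rpow (h.ratio_pos j hj).le dist_nonneg]
  calc q j * dist (F x) (F y) ≤ p j ^ α * (K * dist (G x) (G y) ^ α) :=
        mul_le_mul (h.ratio_le_rpow j hj) hxy dist_nonneg hpα
    _ = K * (p j ^ α * dist (G x) (G y) ^ α) := by ring

theorem dist_le_of_Icc_subset (h : IsConjugateParam m T r t ε G F p q α M) {δ : ℝ}
    (hδ : 0 < δ) (hδp : ∀ j < m, δ ≤ p j * dist (G 0) (G 1)) {s u : ℝ} (hs : s ∈ Icc 0 1)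
    (hu : u ∈ Icc 0 1) {j : ℕ} (hj : j < m) (hsub : Icc (t j) (t (j + 1)) ⊆ uIcc s u) :
    dist (F s) (F u) ≤ diam (F '' Icc 0 1) * (M / δ) ^ α * dist (G s) (G u) ^ α := by
  have hT : ∀ x ∈ Icc (0:ℝ) 1, T j x ∈ uIcc s u := fun x hx =>
    hsub (h.linear.image_Icc hj ▸ mem_image_of_mem _ hx)
  have hfar : δ ≤ M * dist (G s) (G u) :=
    calc δ ≤ p j * dist (G 0) (G 1) := hδp j hj
      _ = dist (G (T j 0)) (G (T j 1)) :=
        (h.dist_G j hj 0 ⟨le_rfl, zero_le_one⟩ 1 ⟨zero_le_one, le_rfl⟩).symm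
      _ ≤ M * dist (G s) (G u) :=
        h.turning s hs u hu _ (hT 0 ⟨le_rfl, zero_le_one⟩) _ (hT 1 ⟨zero_le_one, le_rfl⟩)
  calc dist (F s) (F u) ≤ diam (F '' Icc 0 1) :=
        dist_le_diam_of_mem h.isBounded_F (mem_image_of_mem F hs) (mem_image_of_mem F hu)
    _ ≤ diam (F '' Icc 0 1) * (M / δ * dist (G s) (G u)) ^ α := by
        refine le_mul_of_one_le_right diam_nonneg (Real.one_le_rpow ?_ h.exponent_nonneg)
        rwa [div_mul_eq_mul_div, one_le_div hδ]
    _ = diam (F '' Icc 0 1) * (M / δ) ^ α * dist (G s) (G u) ^ α := by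
        rw [Real.mul_rpow (div_nonneg h.turning_nonneg hδ.le) dist_nonneg, mul_assoc]

theorem exists_dist_vertex_le (h : IsConjugateParam m T r t ε G F p q α M) :
    ∃ K, 0 ≤ K ∧ ∀ i ≤ m, ∀ v ∈ Icc (0:ℝ) 1,
      dist (F (t i)) (F v) ≤ K * dist (G (t i)) (G v) ^ α := by
  have hmono := h.linear.strictMonoOn.monotoneOn
  obtain ⟨ρ, hρ1, hρ⟩ := h.linear.exists_ratio_le
  obtain ⟨ρ', hρ'0, hρ'⟩ := exists_gt_forall_ge_of_forall_gt h.ratio_pos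
  set δ := ρ' * dist (G 0) (G 1)
  have hδ : 0 < δ := mul_pos hρ'0 h.dist_zero_one_pos
  have hδp : ∀ j < m, δ ≤ p j * dist (G 0) (G 1) := fun j hj =>
    mul_le_mul_of_nonneg_right (hρ' j hj) dist_nonneg
  set K := diam (F '' Icc 0 1) * (M / δ) ^ α
  have hK : 0 ≤ K :=
    mul_nonneg diam_nonneg (Real.rpow_nonneg (div_nonneg h.turning_nonneg hδ.le) α)
  have key : ∀ x ∈ Icc (0:ℝ) 1, ∀ v ∈ Icc (0:ℝ) 1, 0 < dist x v →
      ∀ i ≤ m, t i = x → dist (F x) (F v) ≤ K * dist (G x) (G v) ^ α := by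
    refine (isBounded_Icc (0:ℝ) 1).induction_on_dist hρ1 ?_
    rintro x hx v hv - IH i hi rfl
    rcases exists_mem_Icc_succ_or_mem_uIoo h.linear.1.1 hmono
      (h.linear.Icc_endpoints_eq ▸ hx) (h.linear.Icc_endpoints_eq ▸ hv) with
      ⟨j, hj, hxj, hvj⟩ | ⟨k, hk, hkm⟩
    · obtain ⟨x', hx', v', hv', hTx, rfl, hdist⟩ := h.linear.exists_preimage hj hxj hvj
      obtain ⟨k, hk, rfl⟩ := h.linear.exists_eq_of_apply_eq hi hj hx' hTx
      rw [← hTx]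
      exact h.dist_apply_le_of_dist_le hj hx' hv' (IH _ hx' _ hv'
        (hdist.trans_le (mul_le_mul_of_nonneg_right (hρ j hj) dist_nonneg)) k hk rfl)
    · have hki : i ≠ k := by rintro rfl; exact left_notMem_uIoo hkm
      obtain ⟨j, hj, hsub⟩ := exists_Icc_succ_subset_uIcc hmono hi hk hki
      exact h.dist_le_of_Icc_subset hδ hδp hx hv hj
        (hsub.trans (uIcc_subset_uIcc_left (uIoo_subset_uIcc_self hkm)))
  refine ⟨K, hK, fun i hi v hv => ?_⟩
  rcases (dist_nonneg (x := t i) (y := v)).lt_or_eq with hpos | hzero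
  · exact key _ (h.linear.mem_Icc_zero_one hi) v hv hpos i hi rfl
  · rw [dist_eq_zero.1 hzero.symm, dist_self]
    exact mul_nonneg hK (Real.rpow_nonneg dist_nonneg α)

theorem exists_holder (h : IsConjugateParam m T r t ε G F p q α M) :
    ∃ C > 0, ∀ s ∈ Icc (0:ℝ) 1, ∀ u ∈ Icc (0:ℝ) 1,
      dist (F s) (F u) ≤ C * dist (G s) (G u) ^ α := by
  obtain ⟨K, hK, hvertex⟩ := h.exists_dist_vertex_le
  obtain ⟨ρ, hρ1, hρ⟩ := h.linear.exists_ratio_le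
  set C := 2 * K * M ^ α + 1
  have hMα : 0 ≤ M ^ α := Real.rpow_nonneg h.turning_nonneg α
  have hC : 0 < C := by positivity
  have key : ∀ s ∈ Icc (0:ℝ) 1, ∀ u ∈ Icc (0:ℝ) 1, 0 < dist s u →
      dist (F s) (F u) ≤ C * dist (G s) (G u) ^ α := by
    refine (isBounded_Icc (0:ℝ) 1).induction_on_dist hρ1 ?_
    intro s hs u hu _ IH
    rcases exists_mem_Icc_succ_or_mem_uIoo h.linear.1.1 h.linear.strictMonoOn.monotoneOn
      (h.linear.Icc_endpoints_eq ▸ hs) (h.linear.Icc_endpoints_eq ▸ hu) with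
      ⟨j, hj, hsj, huj⟩ | ⟨k, hk, hkm⟩
    · obtain ⟨s', hs', u', hu', rfl, rfl, hdist⟩ := h.linear.exists_preimage hj hsj huj
      exact h.dist_apply_le_of_dist_le hj hs' hu' (IH _ hs' _ hu'
        (hdist.trans_le (mul_le_mul_of_nonneg_right (hρ j hj) dist_nonneg)))
    · have hturn : ∀ v ∈ uIcc s u, dist (G (t k)) (G v) ^ α ≤ (M * dist (G s) (G u)) ^ α :=
        fun v hv => Real.rpow_le_rpow dist_nonneg
          (h.turning s hs u hu _ (uIoo_subset_uIcc_self hkm) v hv) h.exponent_nonneg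
      calc dist (F s) (F u) ≤ dist (F (t k)) (F s) + dist (F (t k)) (F u) :=
            dist_triangle_left _ _ _
        _ ≤ K * dist (G (t k)) (G s) ^ α + K * dist (G (t k)) (G u) ^ α :=
          add_le_add (hvertex k hk s hs) (hvertex k hk u hu)
        _ ≤ K * (M * dist (G s) (G u)) ^ α + K * (M * dist (G s) (G u)) ^ α :=
          add_le_add (mul_le_mul_of_nonneg_left (hturn s left_mem_uIcc) hK)
            (mul_le_mul_of_nonneg_left (hturn u right_mem_uIcc) hK)
        _ ≤ C * dist (G s) (G u) ^ α := by
          rw [Real.mul_rpow h.turning_nonneg dist_nonneg]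
          nlinarith [Real.rpow_nonneg (dist_nonneg (x := G s) (y := G u)) α]
  refine ⟨C, hC, fun s hs u hu => ?_⟩
  rcases (dist_nonneg (x := s) (y := u)).lt_or_eq with hpos | hzero
  · exact key s hs u hu hpos
  · rw [dist_eq_zero.1 hzero.symm, dist_self]
    exact mul_nonneg hC.le (Real.rpow_nonneg dist_nonneg α)

end IsConjugateParam

theorem agreeing_homeo_holder_general {n : ℕ} (m : ℕ)
    (S S' : ℕ → EuclideanSpace ℝ (Fin n) → EuclideanSpace ℝ (Fin n)) (p q : ℕ → ℝ)
    (z z' : ℕ → EuclideanSpace ℝ (Fin n)) (ε : ℕ → ℕ)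
    (γ γ' : Set (EuclideanSpace ℝ (Fin n)))
    (hS : IsJordanZipper m S p z ε γ) (hS' : IsJordanZipper m S' q z' ε γ')
    (M : ℝ) (hγ : BoundedTurning γ M)
    (f : EuclideanSpace ℝ (Fin n) → EuclideanSpace ℝ (Fin n))
    (hf : IsHomeoOnto γ γ' f) (hfa : Agrees m S S' γ f)
    (hm : 0 < m) (α : ℝ)
    (hα : α = (Finset.range m).inf' (Finset.nonempty_range_iff.mpr hm.ne')
      (fun i => min (Real.log (p i) / Real.log (q i)) (Real.log (q i) / Real.log (p i)))) :
    ∃ C > (0:ℝ), ∀ x ∈ γ, ∀ y ∈ γ, dist (f x) (f y) ≤ C * dist x y ^ α := by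
  obtain ⟨⟨-, hp, -, -⟩, -, T, r, t, g, hT, ⟨hgc, -, hgS⟩, hginj, rfl⟩ := hS
  obtain ⟨⟨-, hq, -, -⟩, ⟨-, hγ'c, -⟩, -⟩ := hS'
  have hαj : ∀ j < m, α ≤ Real.log (q j) / Real.log (p j) := fun j hj =>
    (hα ▸ Finset.inf'_le _ (Finset.mem_range.2 hj)).trans (min_le_right _ _)
  have hparam : IsConjugateParam m T r t ε g (f ∘ g) p q α M :=
    { linear := hT
      dist_G := fun j hj x hx y hy => by rw [← hgS j hj x hx, ← hgS j hj y hy, (hp j hj).2.2]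
      dist_F := fun j hj x hx y hy => by
        simp only [Function.comp_apply]
        rw [← hgS j hj x hx, ← hgS j hj y hy, hfa j hj _ (mem_image_of_mem g hx),
          hfa j hj _ (mem_image_of_mem g hy), (hq j hj).2.2]
      ratio_pos := fun j hj => (hp j hj).1
      ratio_le_rpow := fun j hj =>
        le_rpow_of_le_log_div_log (hp j hj).1 (hp j hj).2.1 (hq j hj).1 (hαj j hj)
      exponent_nonneg := hα ▸ Finset.le_inf' _ _ fun j hj =>
        have hj := Finset.mem_range.1 hj
        min_log_div_log_nonneg (hp j hj).1.le (hp j hj).2.1.le (hq j hj).1.le (hq j hj).2.1.le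
      dist_zero_one_pos :=
        dist_pos.2 (hginj.ne ⟨le_rfl, zero_le_one⟩ ⟨zero_le_one, le_rfl⟩ zero_ne_one)
      isBounded_F := by rw [image_comp, hf.2.2]; exact hγ'c.isBounded
      turning := fun _ hs _ hu _ hx _ hy => hγ.dist_le ⟨hgc, hginj, rfl⟩ hs hu hx hy }
  obtain ⟨C, hC, hCg⟩ := hparam.exists_holder
  refine ⟨C, hC, ?_⟩
  rintro _ ⟨s, hs, rfl⟩ _ ⟨u, hu, rfl⟩
  exact hCg s hs u hu

/-- the agreeing homeomorphism between attractors of bounded turning is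
Hölder continuous with exponent `α = min_i min(log p_i / log q_i, log q_i / log p_i)`. -/
theorem agreeing_homeo_holder {n : ℕ} (m : ℕ)
    (S S' : ℕ → EuclideanSpace ℝ (Fin n) → EuclideanSpace ℝ (Fin n)) (p q : ℕ → ℝ)
    (z z' : ℕ → EuclideanSpace ℝ (Fin n)) (ε : ℕ → ℕ)
    (γ γ' : Set (EuclideanSpace ℝ (Fin n)))
    (hS : IsJordanZipper m S p z ε γ) (hS' : IsJordanZipper m S' q z' ε γ')
    (M M' : ℝ) (hγ : BoundedTurning γ M) (hγ' : BoundedTurning γ' M')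
    (f : EuclideanSpace ℝ (Fin n) → EuclideanSpace ℝ (Fin n))
    (hf : IsHomeoOnto γ γ' f) (hfa : Agrees m S S' γ f)
    (hm : 0 < m) (α : ℝ)
    (hα : α = (Finset.range m).inf' (Finset.nonempty_range_iff.mpr hm.ne')
      (fun i => min (Real.log (p i) / Real.log (q i)) (Real.log (q i) / Real.log (p i)))) :
    ∃ C > (0:ℝ), ∀ x ∈ γ, ∀ y ∈ γ, dist (f x) (f y) ≤ C * dist x y ^ α :=
  agreeing_homeo_holder_general m S S' p q z z' ε γ γ' hS hS' M hγ f hf hfa hm α hα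
end
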